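/- Let K be a field, let α, β : ℤ → K, and let z, ζ ∈ K be such that all occurring shifted powers are defined and nonzero. Then for every n ≥ 1: (z - ζ) · ∑_{j=1}^{n} (1 - α_j β_j) · [(z;α)^{j-1} (ζ|β)^{j-1}] / [(z|β)^{j} (ζ;α)^{j}] = 1 - [(z;α)^{n} (ζ|β)^{n}] / [(z|β)^{n} (ζ;α)^{n}]. -/

import Mathlib

open Finset

/-- The shifted power `(z|γ)^k = ∏_{j=1}^k (z - γ_j)` for `k ≥ 0`. -/
noncomputable def barPow {K : Type*} [Field K] (z : K) (γ : ℕ → K) (k : ℕ) : K :=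
  ∏ j ∈ range k, (z - γ (j + 1))

/-- The shifted power `(z;γ)^k = ∏_{j=1}^k (1 - z γ_j)` for `k ≥ 0`. -/
noncomputable def semiPow {K : Type*} [Field K] (z : K) (γ : ℕ → K) (k : ℕ) : K :=
  ∏ j ∈ range k, (1 - z * γ (j + 1))

/-! Each summand is the difference of two consecutive values of the ratio
`R_k = (z;α)^k (ζ|β)^k / ((z|β)^k (ζ;α)^k)`, because of the polynomial identity
`(z - ζ)(1 - ab) = (z - b)(1 - ζa) - (1 - za)(ζ - b)`; the sum telescopes to `R_0 - R_n = 1 - R_n`. -/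

section ShiftedPow

variable {K : Type*} [Field K]

@[simp]
theorem barPow_zero (z : K) (γ : ℕ → K) : barPow z γ 0 = 1 := prod_range_zero _

@[simp]
theorem semiPow_zero (z : K) (γ : ℕ → K) : semiPow z γ 0 = 1 := prod_range_zero _

theorem barPow_succ (z : K) (γ : ℕ → K) (k : ℕ) :
    barPow z γ (k + 1) = barPow z γ k * (z - γ (k + 1)) :=
  prod_range_succ _ _

theorem semiPow_succ (z : K) (γ : ℕ → K) (k : ℕ) :
    semiPow z γ (k + 1) = semiPow z γ k * (1 - z * γ (k + 1)) :=
  prod_range_succ _ _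

theorem barPow_ne_zero {z : K} {γ : ℕ → K} (h : ∀ j, z - γ j ≠ 0) (k : ℕ) :
    barPow z γ k ≠ 0 :=
  prod_ne_zero_iff.2 fun j _ => h (j + 1)

theorem semiPow_ne_zero {z : K} {γ : ℕ → K} (h : ∀ j, 1 - z * γ j ≠ 0) (k : ℕ) :
    semiPow z γ k ≠ 0 :=
  prod_ne_zero_iff.2 fun j _ => h (j + 1)

noncomputable def shiftedPowRatio (α β : ℕ → K) (z ζ : K) (k : ℕ) : K :=
  semiPow z α k * barPow ζ β k / (barPow z β k * semiPow ζ α k)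

@[simp]
theorem shiftedPowRatio_zero (α β : ℕ → K) (z ζ : K) : shiftedPowRatio α β z ζ 0 = 1 := by
  simp [shiftedPowRatio]

theorem sub_mul_one_sub_mul (z ζ a b : K) :
    (z - ζ) * (1 - a * b) = (z - b) * (1 - ζ * a) - (1 - z * a) * (ζ - b) := by
  ring

theorem sub_mul_summand_eq_shiftedPowRatio_sub {α β : ℕ → K} {z ζ : K}
    (h1 : ∀ j, z - β j ≠ 0) (h2 : ∀ j, 1 - ζ * α j ≠ 0) (k : ℕ) :
    (z - ζ) * ((1 - α (k + 1) * β (k + 1)) * (semiPow z α k * barPow ζ β k) /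
        (barPow z β (k + 1) * semiPow ζ α (k + 1))) =
      shiftedPowRatio α β z ζ k - shiftedPowRatio α β z ζ (k + 1) := by
  have hb := barPow_ne_zero h1 k
  have hs := semiPow_ne_zero h2 k
  have hb' := h1 (k + 1)
  have hs' := h2 (k + 1)
  simp only [shiftedPowRatio, barPow_succ, semiPow_succ]
  rw [← mul_div_assoc, ← mul_assoc, sub_mul_one_sub_mul]
  field_simp

end ShiftedPow

theorem stmt_14_general {K : Type*} [Field K] (α β : ℕ → K) (z ζ : K)
    (h1 : ∀ j, z - β j ≠ 0) (h2 : ∀ j, 1 - ζ * α j ≠ 0) (n : ℕ) :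
    (z - ζ) * ∑ j ∈ range n,
        (1 - α (j + 1) * β (j + 1)) * (semiPow z α j * barPow ζ β j) /
          (barPow z β (j + 1) * semiPow ζ α (j + 1)) =
      1 - semiPow z α n * barPow ζ β n / (barPow z β n * semiPow ζ α n) := by
  rw [mul_sum, sum_congr rfl fun k _ => sub_mul_summand_eq_shiftedPowRatio_sub h1 h2 k,
    sum_range_sub', shiftedPowRatio_zero, shiftedPowRatio]

/-- Telescoping identity:
`(z - ζ) ∑_{j=1}^{n} (1-α_jβ_j) (z;α)^{j-1}(ζ|β)^{j-1}/[(z|β)^j (ζ;α)^j]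
  = 1 - (z;α)^n (ζ|β)^n / [(z|β)^n (ζ;α)^n]`. -/
theorem stmt_14 {K : Type*} [Field K] (α β : ℕ → K) (z ζ : K)
    (h1 : ∀ j, z - β j ≠ 0) (h2 : ∀ j, 1 - ζ * α j ≠ 0) (n : ℕ) (hn : 1 ≤ n) :
    (z - ζ) * ∑ j ∈ range n,
        (1 - α (j + 1) * β (j + 1)) * (semiPow z α j * barPow ζ β j) /
          (barPow z β (j + 1) * semiPow ζ α (j + 1)) =
      1 - semiPow z α n * barPow ζ β n / (barPow z β n * semiPow ζ α n) :=
  stmt_14_general α β z ζ h1 h2 n
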